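/- Suppose that for every continuous nonnegative weak solution w of L w = h on B₁ (with h satisfying 0 ≤ h ≤ Λ̄ and the structure conditions preserved under parabolic rescaling) with w(0) = 0, one has ‖w‖_{L^∞(B_{1/2})} ≤ C̃, and that this bound is invariant under the rescalings u_γ(x) = γ² w(x/γ) for γ > 1. Then any such solution w with 0 ∈ ∂{w > 0} satisfies w(x) ≤ 4 C̃ |x|² for all x ∈ B_{1/2}. -/

import Mathlib

open MeasureTheory Metric Set Filter

noncomputable section

abbrev Rn (n : ℕ) := EuclideanSpace ℝ (Fin n)

/-- Optimal regularity via scaling: let `P` be a scaling-invariant class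
of continuous nonnegative solutions for which the `L^∞` bound of Lemma `parabd` holds:
every `w ∈ P` with `w(0) = 0` satisfies `‖w‖_{L^∞(B_{1/2})} ≤ C̃`, and the class is
invariant under the rescalings `u_γ(x) = γ² w(x/γ)`, `γ > 1`.  Then any `w ∈ P` with
`0 ∈ ∂{w > 0}` satisfies `w(x) ≤ 4 C̃ |x|²` on `B_{1/2}`. -/
theorem stmt3 (n : ℕ) (P : (Rn n → ℝ) → Prop) (Ctil : ℝ) (hCtil : 0 < Ctil)
    (hPc : ∀ w, P w → Continuous w ∧ ∀ x, 0 ≤ w x)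
    (hscale : ∀ γ : ℝ, 1 < γ → ∀ w, P w → P (fun x => γ ^ 2 * w (γ⁻¹ • x)))
    (hbound : ∀ w, P w → w 0 = 0 → ∀ x ∈ ball (0 : Rn n) (1/2), w x ≤ Ctil)
    (w : Rn n → ℝ) (hw : P w) (hfb : (0 : Rn n) ∈ frontier {x | 0 < w x}) :
    ∀ x ∈ ball (0 : Rn n) (1/2), w x ≤ 4 * Ctil * ‖x‖ ^ 2 := by
  have hw0 : w 0 = 0 := by
    have hopen : IsOpen {x : Rn n | 0 < w x} := isOpen_lt continuous_const (hPc w hw).1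
    have hnot : (0 : Rn n) ∉ {x : Rn n | 0 < w x} := by
      intro hmem
      exact hfb.2 (by rwa [hopen.interior_eq])
    have h1 := (hPc w hw).2 0
    have h2 : ¬ 0 < w 0 := hnot
    linarith [not_lt.mp h2]
  intro x hx
  rcases le_or_gt (w x) 0 with h | h
  · have : (0:ℝ) ≤ 4 * Ctil * ‖x‖ ^ 2 := by positivity
    linarith
  · by_contra hcon
    push_neg at hcon
    have hx0 : x ≠ 0 := by
      rintro rfl
      simp [hw0] at h
    have hxn : 0 < ‖x‖ := norm_pos_iff.mpr hx0
    have hwle : w x ≤ Ctil := hbound w hw hw0 x hx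
    set a := Real.sqrt (Ctil / w x) with ha
    have ha2 : a ^ 2 = Ctil / w x := Real.sq_sqrt (by positivity)
    have ha1 : 1 ≤ a := by
      rw [ha, show (1:ℝ) = Real.sqrt 1 by simp]
      apply Real.sqrt_le_sqrt
      rw [le_div_iff₀ h]; linarith
    have hab : a < 1 / (2 * ‖x‖) := by
      have h2 : Ctil / w x < (1 / (2 * ‖x‖)) ^ 2 := by
        rw [div_lt_iff₀ h, div_pow, one_pow, div_mul_eq_mul_div, lt_div_iff₀ (by positivity)]
        nlinarith
      nlinarith [Real.sqrt_nonneg (Ctil / w x), (by positivity : (0:ℝ) < 1 / (2 * ‖x‖))]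
    set γ := (a + 1 / (2 * ‖x‖)) / 2 with hγ
    have hγ1 : 1 < γ := by rw [hγ]; linarith
    have hγa : a < γ := by rw [hγ]; linarith
    have hγb : γ < 1 / (2 * ‖x‖) := by rw [hγ]; linarith
    have hγ0 : (0:ℝ) < γ := by linarith
    have hu := hscale γ hγ1 w hw
    have hu0 : (fun y => γ ^ 2 * w (γ⁻¹ • y)) 0 = 0 := by simp [hw0]
    have hmem : γ • x ∈ ball (0 : Rn n) (1/2) := by
      rw [mem_ball_zero_iff, norm_smul, Real.norm_eq_abs, abs_of_pos hγ0]
      calc γ * ‖x‖ < (1 / (2 * ‖x‖)) * ‖x‖ := by nlinarith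
        _ = 1/2 := by field_simp
    have hub := hbound _ hu hu0 (γ • x) hmem
    simp only [inv_smul_smul₀ (ne_of_gt hγ0)] at hub
    have haw : a ^ 2 * w x = Ctil := by rw [ha2]; field_simp
    nlinarith [mul_pos (sub_pos.mpr hγa) (show (0:ℝ) < γ + a by linarith)]
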